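/- Suppose (A,·,P) is a unital commutative differential algebra with a nondegenerate symmetric invariant bilinear form B, and let [x,y] = x·P(y) − P(x)·y. Then (A,·,[-,-]) is a Jacobi algebra, B is a commutative 2-cocycle on (A,[-,-]), and P = ad(1) = [1,-]. -/

import Mathlib

/-!
A commutative, associative, unital bilinear multiplication makes `A` a commutative `K`-algebra and
`P` a derivation of it, so the statement is about the Witt-type bracket `x * D y - D x * y` of a
derivation `D`. Antisymmetry, the Jacobi identity and the Jacobi-algebra Leibniz rule are then ring
identities once `D` is expanded by the Leibniz rule, and `D 1 = 0` gives `[1, x] = D x`. For the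
cocycle identity, invariance together with commutativity makes `B (a * b) c` invariant under cyclic
permutations of `a, b, c`, and the six terms of the cyclic sum cancel in pairs.
-/

abbrev commRingOfBilinear {K A : Type*} [CommSemiring K] [AddCommGroup A] [Module K A]
    (mul : A →ₗ[K] A →ₗ[K] A) (one : A)
    (hcomm : ∀ x y : A, mul x y = mul y x)
    (hassoc : ∀ x y z : A, mul (mul x y) z = mul x (mul y z))
    (hone : ∀ x : A, mul one x = x) : CommRing A :=
  { (inferInstance : AddCommGroup A) with
    mul x y := mul x y
    one := one
    left_distrib a b c := map_add (mul a) b c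
    right_distrib a b c := LinearMap.map_add₂ mul a b c
    zero_mul a := LinearMap.map_zero₂ mul a
    mul_zero a := map_zero (mul a)
    mul_assoc := hassoc
    one_mul := hone
    mul_one x := (hcomm x one).trans (hone x)
    mul_comm := hcomm }

section WittBracket

variable {A : Type*} [CommRing A]

def wittBracket (D : A → A) (x y : A) : A :=
  x * D y - D x * y

theorem wittBracket_antisymm (D : A → A) (x y : A) :
    wittBracket D x y = -wittBracket D y x := by
  unfold wittBracket
  ring

theorem wittBracket_cocycle {R M : Type*} [CommSemiring R] [Module R A] [AddCommGroup M]
    [Module R M] (B : A →ₗ[R] A →ₗ[R] M) (hB : ∀ x y z : A, B (x * y) z = B x (y * z))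
    (D : A → A) (x y z : A) :
    B (wittBracket D x y) z + B (wittBracket D y z) x + B (wittBracket D z x) y = 0 := by
  have rotate (a b c : A) : B (a * b) c = B (b * c) a := by
    rw [mul_comm a b, hB, mul_comm a c, ← hB]
  simp only [wittBracket, map_sub, LinearMap.sub_apply]
  rw [rotate x (D y) z, rotate y (D z) x, rotate z (D x) y]
  abel

variable {R : Type*} [CommSemiring R] [Algebra R A] (D : Derivation R A A)

theorem wittBracket_jacobi (x y z : A) :
    wittBracket D x (wittBracket D y z) + wittBracket D y (wittBracket D z x)
      + wittBracket D z (wittBracket D x y) = 0 := by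
  simp only [wittBracket, map_sub, Derivation.leibniz, smul_eq_mul]
  ring

theorem wittBracket_one_left (x : A) : wittBracket D 1 x = D x := by
  simp [wittBracket]

theorem wittBracket_mul_right (x y z : A) :
    wittBracket D z (x * y)
      = wittBracket D z x * y + x * wittBracket D z y + x * y * wittBracket D 1 z := by
  rw [wittBracket_one_left]
  simp only [wittBracket, Derivation.leibniz, smul_eq_mul]
  ring

end WittBracket

theorem unital_diff_frobenius_gives_jacobi_general {K A : Type*} [Field K]
    [AddCommGroup A] [Module K A]
    (mul : A →ₗ[K] A →ₗ[K] A)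
    (hcomm : ∀ x y : A, mul x y = mul y x)
    (hassoc : ∀ x y z : A, mul (mul x y) z = mul x (mul y z))
    (one : A)
    (hone : ∀ x : A, mul one x = x)
    (P : A →ₗ[K] A)
    (hP : ∀ x y : A, P (mul x y) = mul (P x) y + mul x (P y))
    (B : A →ₗ[K] A →ₗ[K] K)
    (hinv : ∀ x y z : A, B (mul x y) z = B x (mul y z))
    (br : A → A → A)
    (hbr : ∀ x y : A, br x y = mul x (P y) - mul (P x) y) :
    (∀ x y : A, br x y = - br y x) ∧
    (∀ x y z : A, br x (br y z) + br y (br z x) + br z (br x y) = 0) ∧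
    (∀ x y z : A, br z (mul x y)
      = mul (br z x) y + mul x (br z y) + mul (mul x y) (br one z)) ∧
    (∀ x y z : A, B (br x y) z + B (br y z) x + B (br z x) y = 0) ∧
    (∀ x : A, P x = br one x) := by
  let _ : CommRing A := commRingOfBilinear mul one hcomm hassoc hone
  let _ : Algebra K A :=
    Algebra.ofModule (LinearMap.map_smul₂ mul) fun r x y => map_smul (mul x) r y
  let D : Derivation K A A := Derivation.mk' P fun x y => by
    rw [smul_eq_mul, smul_eq_mul, add_comm, mul_comm y]
    exact hP x y
  obtain rfl : br = wittBracket D := funext₂ hbr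
  exact ⟨wittBracket_antisymm D, wittBracket_jacobi D, wittBracket_mul_right D,
    wittBracket_cocycle B hinv D, fun x => (wittBracket_one_left D x).symm⟩

/-- A unital commutative differential algebra with a nondegenerate
symmetric invariant bilinear form yields a Jacobi algebra via the Witt type bracket,
on which B is a commutative 2-cocycle, and P = [1,-]. -/
theorem unital_diff_frobenius_gives_jacobi {K A : Type*} [Field K] [CharZero K]
    [AddCommGroup A] [Module K A]
    (mul : A →ₗ[K] A →ₗ[K] A)
    (hcomm : ∀ x y : A, mul x y = mul y x)
    (hassoc : ∀ x y z : A, mul (mul x y) z = mul x (mul y z))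
    (one : A)
    (hone : ∀ x : A, mul one x = x)
    (P : A →ₗ[K] A)
    (hP : ∀ x y : A, P (mul x y) = mul (P x) y + mul x (P y))
    (B : A →ₗ[K] A →ₗ[K] K)
    (hsymm : ∀ x y : A, B x y = B y x)
    (hnondeg : ∀ x : A, (∀ y : A, B x y = 0) → x = 0)
    (hinv : ∀ x y z : A, B (mul x y) z = B x (mul y z))
    (br : A → A → A)
    (hbr : ∀ x y : A, br x y = mul x (P y) - mul (P x) y) :
    (∀ x y : A, br x y = - br y x) ∧
    (∀ x y z : A, br x (br y z) + br y (br z x) + br z (br x y) = 0) ∧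
    (∀ x y z : A, br z (mul x y)
      = mul (br z x) y + mul x (br z y) + mul (mul x y) (br one z)) ∧
    (∀ x y z : A, B (br x y) z + B (br y z) x + B (br z x) y = 0) ∧
    (∀ x : A, P x = br one x) :=
  unital_diff_frobenius_gives_jacobi_general mul hcomm hassoc one hone P hP B hinv br hbr
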